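/- Let X ∈ ℝ^{m×n} be T₁-sparse with parameters (v, t₁, t₂, c) with c > 0, let u > 0 satisfy m·n·u ≤ 1/64 and n·(n+1)·u ≤ 1/64, and set γ_{n+1} := (n+1)·u/(1 − (n+1)·u). Let s be a real number with 11·(m·u + (n+1)·u)·(v·t₁ + n·t₂)·c² ≤ s ≤ (1/(100·n))·(v·t₁ + n·t₂)·c². Suppose Y ∈ ℝ^{n×n} and E_A, E_B ∈ ℝ^{n×n} satisfy YᵀY = XᵀX + s·I + E_A + E_B, ‖E_A‖₂ ≤ 1.1·m·u·(v·t₁ + n·t₂)·c², and the entrywise bound |(E_B)_{ij}| ≤ γ_{n+1}·Σ_{k=1}^{n} |y_{ki}|·|y_{kj}| for all i, j. Then ‖E_B‖₂ ≤ 1.1·(n+1)·u·(v·t₁ + n·t₂)·c². -/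

import Mathlib

/-!
Taking traces in `YᵀY = XᵀX + sI + E_A + E_B` bounds `‖Y‖_F²` by
`‖X‖_F² + s n + n ‖E_A‖₂ + tr E_B`. Sparsity gives `‖X‖_F² ≤ (v t₁ + n t₂) c²`, and the
entrywise bound on `E_B` gives, by Cauchy–Schwarz, both `tr E_B ≤ γ ‖Y‖_F²` and
`‖E_B‖₂ ≤ ‖E_B‖_F ≤ γ ‖Y‖_F²`. Solving `‖Y‖_F² ≤ b + γ ‖Y‖_F²` with `γ = a / (1 - a)`,
`a = (n + 1) u`, gives `γ ‖Y‖_F² ≤ a b / (1 - 2a)`, and the hypotheses on `s`, `E_A` and `u`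
make this at most `1.1 a (v t₁ + n t₂) c²`.
-/

open Matrix Finset

noncomputable def specNorm {m n : ℕ} (A : Matrix (Fin m) (Fin n) ℝ) : ℝ :=
  ‖(Matrix.toEuclideanLin A).toContinuousLinearMap‖

noncomputable def frobNorm {m n : ℕ} (A : Matrix (Fin m) (Fin n) ℝ) : ℝ :=
  Real.sqrt (∑ i, ∑ j, (A i j) ^ 2)

noncomputable def gNorm {m n : ℕ} (A : Matrix (Fin m) (Fin n) ℝ) : ℝ :=
  ⨆ j : Fin n, Real.sqrt (∑ i, (A i j) ^ 2)

noncomputable def sigmaMin {m n : ℕ} (A : Matrix (Fin m) (Fin n) ℝ) : ℝ :=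
  ⨅ x : Metric.sphere (0 : EuclideanSpace ℝ (Fin n)) 1,
    ‖(Matrix.toEuclideanLin A) (x : EuclideanSpace ℝ (Fin n))‖

noncomputable def condNum {m n : ℕ} (A : Matrix (Fin m) (Fin n) ℝ) : ℝ :=
  specNorm A / sigmaMin A

def IsT1Sparse {m n : ℕ} (X : Matrix (Fin m) (Fin n) ℝ) (v t₁ t₂ : ℕ) (c : ℝ) : Prop :=
  ∃ S : Finset (Fin n), S.card = v ∧
    (∀ j ∈ S, Set.ncard {i | X i j ≠ 0} ≤ t₁) ∧
    (∀ j ∉ S, Set.ncard {i | X i j ≠ 0} ≤ t₂) ∧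
    ∀ i j, |X i j| ≤ c

lemma frobNorm_sq {m n : ℕ} (A : Matrix (Fin m) (Fin n) ℝ) :
    frobNorm A ^ 2 = ∑ i, ∑ j, A i j ^ 2 :=
  Real.sq_sqrt (by positivity)

lemma trace_transpose_mul_self_eq_frobNorm_sq {m n : ℕ} (A : Matrix (Fin m) (Fin n) ℝ) :
    trace (Aᵀ * A) = frobNorm A ^ 2 := by
  rw [frobNorm_sq, Finset.sum_comm]
  simp only [trace, Matrix.diag, mul_apply, transpose_apply, sq]

lemma specNorm_le_frobNorm {m n : ℕ} (A : Matrix (Fin m) (Fin n) ℝ) :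
    specNorm A ≤ frobNorm A := by
  refine ContinuousLinearMap.opNorm_le_bound _ (Real.sqrt_nonneg _) fun x ↦ ?_
  have hAx : ∀ i, (toEuclideanLin A).toContinuousLinearMap x i = ∑ j, A i j * x j :=
    fun i ↦ rfl
  rw [EuclideanSpace.norm_eq, EuclideanSpace.norm_eq, frobNorm, ← Real.sqrt_mul (by positivity)]
  refine Real.sqrt_le_sqrt ?_
  simp only [Real.norm_eq_abs, sq_abs, hAx]
  rw [Finset.sum_mul]
  exact Finset.sum_le_sum fun i _ ↦ Finset.sum_mul_sq_le_sq_mul_sq _ _ _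

lemma diag_le_specNorm {n : ℕ} (A : Matrix (Fin n) (Fin n) ℝ) (i : Fin n) :
    A i i ≤ specNorm A := by
  set T := (toEuclideanLin A).toContinuousLinearMap
  set e : EuclideanSpace ℝ (Fin n) := EuclideanSpace.single i 1
  have hTe : T e i = A i i := by simp [T, e]
  calc A i i ≤ ‖T e‖ := hTe ▸ (Real.le_norm_self _).trans (PiLp.norm_apply_le _ i)
    _ ≤ specNorm A := (T.le_opNorm e).trans_eq (by simp [e, specNorm, T])

lemma trace_le_mul_specNorm {n : ℕ} (A : Matrix (Fin n) (Fin n) ℝ) :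
    trace A ≤ n * specNorm A := by
  calc trace A ≤ ∑ _i : Fin n, specNorm A := Finset.sum_le_sum fun i _ ↦ diag_le_specNorm A i
    _ = n * specNorm A := by simp

lemma sum_sq_le_of_ncard_support_le {ι : Type*} [Fintype ι] {f : ι → ℝ} {c : ℝ} {t : ℕ}
    (hf : ∀ i, |f i| ≤ c) (ht : {i | f i ≠ 0}.ncard ≤ t) :
    ∑ i, f i ^ 2 ≤ t * c ^ 2 := by
  classical
  set S := univ.filter fun i ↦ f i ≠ 0
  have hS : S.card ≤ t := by
    rwa [← Set.ncard_coe_finset, Finset.coe_filter_univ]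
  calc ∑ i, f i ^ 2 = ∑ i ∈ S, f i ^ 2 :=
        (Finset.sum_filter_of_ne fun i _ hi ↦ by simpa using hi).symm
    _ ≤ S.card * c ^ 2 := by
        simpa using Finset.sum_le_card_nsmul S _ (c ^ 2) fun i _ ↦ by
          simpa only [sq_abs] using pow_le_pow_left₀ (abs_nonneg _) (hf i) 2
    _ ≤ t * c ^ 2 := by gcongr

lemma IsT1Sparse.frobNorm_sq_le {m n : ℕ} {X : Matrix (Fin m) (Fin n) ℝ} {v t₁ t₂ : ℕ} {c : ℝ}
    (hX : IsT1Sparse X v t₁ t₂ c) : frobNorm X ^ 2 ≤ (v * t₁ + n * t₂) * c ^ 2 := by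
  obtain ⟨S, hS, hS₁, hS₂, hc⟩ := hX
  have hcol : ∀ j t, {i | X i j ≠ 0}.ncard ≤ t → ∑ i, X i j ^ 2 ≤ t * c ^ 2 :=
    fun j _ ↦ sum_sq_le_of_ncard_support_le fun i ↦ hc i j
  have hSc : ((Sᶜ).card : ℝ) ≤ n := by
    exact_mod_cast (card_le_univ Sᶜ).trans_eq (Fintype.card_fin n)
  rw [frobNorm_sq, Finset.sum_comm, ← Finset.sum_add_sum_compl S]
  calc ∑ j ∈ S, ∑ i, X i j ^ 2 + ∑ j ∈ Sᶜ, ∑ i, X i j ^ 2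
      ≤ ∑ j ∈ S, (t₁ : ℝ) * c ^ 2 + ∑ j ∈ Sᶜ, (t₂ : ℝ) * c ^ 2 :=
        add_le_add (Finset.sum_le_sum fun j hj ↦ hcol j t₁ (hS₁ j hj))
          (Finset.sum_le_sum fun j hj ↦ hcol j t₂ (hS₂ j (Finset.mem_compl.mp hj)))
    _ ≤ (v * t₁ + n * t₂) * c ^ 2 := by
        simp only [Finset.sum_const, nsmul_eq_mul, hS]
        nlinarith [mul_le_mul_of_nonneg_right hSc (by positivity : (0 : ℝ) ≤ t₂ * c ^ 2)]

lemma frobNorm_sq_eq_sum_col {k n : ℕ} (Y : Matrix (Fin k) (Fin n) ℝ) :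
    frobNorm Y ^ 2 = ∑ i, ∑ l, |Y l i| * |Y l i| := by
  rw [frobNorm_sq, Finset.sum_comm]
  simp only [abs_mul_abs_self, sq]

section EntrywiseBound

variable {k n : ℕ} {E : Matrix (Fin n) (Fin n) ℝ} {Y : Matrix (Fin k) (Fin n) ℝ} {γ : ℝ}

lemma trace_le_of_abs_le_mul_sum_abs (hE : ∀ i j, |E i j| ≤ γ * ∑ l, |Y l i| * |Y l j|) :
    trace E ≤ γ * frobNorm Y ^ 2 := by
  rw [frobNorm_sq_eq_sum_col, Finset.mul_sum]
  exact Finset.sum_le_sum fun i _ ↦ (le_abs_self _).trans (hE i i)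

lemma frobNorm_le_of_abs_le_mul_sum_abs (hγ : 0 ≤ γ)
    (hE : ∀ i j, |E i j| ≤ γ * ∑ l, |Y l i| * |Y l j|) :
    frobNorm E ≤ γ * frobNorm Y ^ 2 := by
  set col : Fin n → ℝ := fun i ↦ ∑ l, |Y l i| * |Y l i|
  have hentry : ∀ i j, E i j ^ 2 ≤ γ ^ 2 * (col i * col j) := fun i j ↦ by
    calc E i j ^ 2 ≤ (γ * ∑ l, |Y l i| * |Y l j|) ^ 2 := by
          rw [← sq_abs]; gcongr; exact hE i j
      _ ≤ γ ^ 2 * (col i * col j) := by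
          rw [mul_pow]
          gcongr
          simpa [col, sq] using Finset.sum_mul_sq_le_sq_mul_sq univ (|Y · i|) (|Y · j|)
  rw [frobNorm, Real.sqrt_le_iff]
  refine ⟨by positivity, ?_⟩
  calc ∑ i, ∑ j, E i j ^ 2 ≤ ∑ i, ∑ j, γ ^ 2 * (col i * col j) :=
        Finset.sum_le_sum fun i _ ↦ Finset.sum_le_sum fun j _ ↦ hentry i j
    _ = (γ * frobNorm Y ^ 2) ^ 2 := by
        simp only [frobNorm_sq_eq_sum_col, ← Finset.mul_sum, ← Finset.sum_mul, col]
        ring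

end EntrywiseBound

lemma mul_le_of_le_add_div_one_sub_mul {a b F : ℝ} (ha : 0 ≤ a) (ha' : 2 * a < 1)
    (hF : F ≤ b + a / (1 - a) * F) : a / (1 - a) * F ≤ a / (1 - 2 * a) * b := by
  have h1a : 0 < 1 - a := by linarith
  have h2a : 0 < 1 - 2 * a := by linarith
  have hF' : (1 - 2 * a) * F ≤ (1 - a) * b := by
    have := mul_le_mul_of_nonneg_left hF h1a.le
    rw [mul_add, ← mul_assoc, mul_div_cancel₀ _ h1a.ne'] at this
    linarith
  rw [div_mul_eq_mul_div, div_mul_eq_mul_div, div_le_div_iff₀ h1a h2a]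
  nlinarith

theorem stmt6_general {m n : ℕ} (X : Matrix (Fin m) (Fin n) ℝ) (v t₁ t₂ : ℕ) (c u s : ℝ)
    (hv1 : 1 ≤ v) (hvn : v ≤ n)
    (hX : IsT1Sparse X v t₁ t₂ c) (hu : 0 < u)
    (hmnu : (m : ℝ) * n * u ≤ 1 / 64) (hnnu : (n : ℝ) * (n + 1) * u ≤ 1 / 64)
    (hs2 : s ≤ (1 / (100 * (n : ℝ))) * ((v : ℝ) * t₁ + (n : ℝ) * t₂) * c ^ 2)
    (Y EA EB : Matrix (Fin n) (Fin n) ℝ)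
    (hGram : Yᵀ * Y = Xᵀ * X + s • (1 : Matrix (Fin n) (Fin n) ℝ) + EA + EB)
    (hEA : specNorm EA ≤ 1.1 * m * u * ((v : ℝ) * t₁ + (n : ℝ) * t₂) * c ^ 2)
    (hEB : ∀ i j, |EB i j| ≤
      (((n : ℝ) + 1) * u / (1 - ((n : ℝ) + 1) * u)) * ∑ k, |Y k i| * |Y k j|) :
    specNorm EB ≤ 1.1 * ((n : ℝ) + 1) * u * ((v : ℝ) * t₁ + (n : ℝ) * t₂) * c ^ 2 := by
  set K := ((v : ℝ) * t₁ + (n : ℝ) * t₂) * c ^ 2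
  set a := ((n : ℝ) + 1) * u
  have hn : (1 : ℝ) ≤ n := by exact_mod_cast hv1.trans hvn
  have hK : 0 ≤ K := by positivity
  have ha : 0 ≤ a := by positivity
  have ha' : a ≤ 1 / 64 := by nlinarith
  have hsn : s * n ≤ K / 100 := by
    have := mul_le_mul_of_nonneg_right hs2 (by positivity : (0 : ℝ) ≤ n)
    rwa [show 1 / (100 * (n : ℝ)) * ((v : ℝ) * t₁ + n * t₂) * c ^ 2 * n = K / 100 by
      simp only [K]; field_simp] at this
  have hEAn : n * specNorm EA ≤ 1.1 / 64 * K := by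
    nlinarith [mul_le_mul_of_nonneg_left hEA (by positivity : (0 : ℝ) ≤ n)]
  have hF : frobNorm Y ^ 2 ≤ (K + s * n + n * specNorm EA) + a / (1 - a) * frobNorm Y ^ 2 := by
    have htr := congrArg trace hGram
    rw [trace_transpose_mul_self_eq_frobNorm_sq, trace_add, trace_add, trace_add,
      trace_transpose_mul_self_eq_frobNorm_sq, trace_smul, trace_one, Fintype.card_fin,
      smul_eq_mul] at htr
    linarith [hX.frobNorm_sq_le, trace_le_mul_specNorm EA, trace_le_of_abs_le_mul_sum_abs hEB]
  calc specNorm EB ≤ frobNorm EB := specNorm_le_frobNorm EB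
    _ ≤ a / (1 - a) * frobNorm Y ^ 2 :=
        frobNorm_le_of_abs_le_mul_sum_abs (div_nonneg ha (by linarith)) hEB
    _ ≤ a / (1 - 2 * a) * (K + s * n + n * specNorm EA) :=
        mul_le_of_le_add_div_one_sub_mul ha (by linarith) hF
    _ ≤ 1.1 * a * K := by
        rw [div_mul_eq_mul_div, div_le_iff₀ (by linarith)]
        nlinarith [mul_nonneg ha hK]
    _ = 1.1 * ((n : ℝ) + 1) * u * ((v : ℝ) * t₁ + (n : ℝ) * t₂) * c ^ 2 := by ring

/-- Bound on the Cholesky rounding error matrix E_B for a T₁-sparse X. -/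
theorem stmt6 {m n : ℕ} (X : Matrix (Fin m) (Fin n) ℝ) (v t₁ t₂ : ℕ) (c u s : ℝ)
    (hv1 : 1 ≤ v) (hvn : v ≤ n) (ht : t₂ ≤ t₁) (htm : t₁ ≤ m) (hc : 0 < c)
    (hX : IsT1Sparse X v t₁ t₂ c) (hu : 0 < u)
    (hmnu : (m : ℝ) * n * u ≤ 1 / 64) (hnnu : (n : ℝ) * (n + 1) * u ≤ 1 / 64)
    (hs1 : 11 * ((m : ℝ) * u + ((n : ℝ) + 1) * u) * ((v : ℝ) * t₁ + (n : ℝ) * t₂) * c ^ 2 ≤ s)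
    (hs2 : s ≤ (1 / (100 * (n : ℝ))) * ((v : ℝ) * t₁ + (n : ℝ) * t₂) * c ^ 2)
    (Y EA EB : Matrix (Fin n) (Fin n) ℝ)
    (hGram : Yᵀ * Y = Xᵀ * X + s • (1 : Matrix (Fin n) (Fin n) ℝ) + EA + EB)
    (hEA : specNorm EA ≤ 1.1 * m * u * ((v : ℝ) * t₁ + (n : ℝ) * t₂) * c ^ 2)
    (hEB : ∀ i j, |EB i j| ≤
      (((n : ℝ) + 1) * u / (1 - ((n : ℝ) + 1) * u)) * ∑ k, |Y k i| * |Y k j|) :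
    specNorm EB ≤ 1.1 * ((n : ℝ) + 1) * u * ((v : ℝ) * t₁ + (n : ℝ) * t₂) * c ^ 2 :=
  stmt6_general X v t₁ t₂ c u s hv1 hvn hX hu hmnu hnnu hs2 Y EA EB hGram hEA hEB
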